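/- Fix m ≥ 3 and let I_m ⊆ ℝ[q₁,q₂] be the ideal generated by a_m and q₂·a_{m−1}. Then there exist weighted homogeneous polynomials f, g ∈ ℝ[q₁,q₂] (for the weights w(q₁)=1, w(q₂)=2) of positive weighted degrees i and j with i + j = m, such that f ∉ I_m, g ∉ I_m, but f·g ∈ I_m. In particular the good divisibility of the graded ring ℝ[q₁,q₂]/I_m is at most m−1 (together with the lower bound, it equals m−1, which is the algebraic content of the statement g.d.(G(1,m)) = m−1). -/

import Mathlib

open MvPolynomial

/-- The recursively defined polynomials `a_m ∈ ℝ[q₁,q₂]`: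
`a₀ = 1`, `a₁ = q₁`, `a_m = q₁·a_{m−1} − q₂·a_{m−2}` for `m ≥ 2`.
Here `q₁ = X 0` and `q₂ = X 1`. -/
noncomputable def a : ℕ → MvPolynomial (Fin 2) ℝ
  | 0 => 1
  | 1 => X 0
  | (m + 2) => X 0 * a (m + 1) - X 1 * a m

/-- Two-step induction on naturals. -/
theorem GdAux.twoStep {P : ℕ → Prop} (h0 : P 0) (h1 : P 1)
    (ih : ∀ n, P n → P (n + 1) → P (n + 2)) : ∀ n, P n := by
  have key : ∀ n, P n ∧ P (n + 1) := by
    intro n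
    induction n with
    | zero => exact ⟨h0, h1⟩
    | succ k hk => exact ⟨hk.2, ih k hk.1 hk.2⟩
  exact fun n => (key n).1

namespace GdAux

/-- Quotient and remainder data for division of `a n` by `X 0 ^ 2 - C c * X 1`. -/
noncomputable def Ge (c : ℝ) : ℕ → MvPolynomial (Fin 2) ℝ × ℝ
  | 0 => (0, 1)
  | 1 => (0, 1)
  | (n + 2) =>
      let p := Ge c (n + 1)
      let q := Ge c n
      if n % 2 = 0 then
        (X 0 * p.1 - X 1 * q.1 + C p.2 * X 1 ^ (n / 2), c * p.2 - q.2)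
      else
        (X 0 * p.1 - X 1 * q.1, p.2 - q.2)

theorem a_eq (c : ℝ) : ∀ n, a n =
    (X 0 ^ 2 - C c * X 1) * (Ge c n).1 +
      C (Ge c n).2 * (X 0 ^ (n % 2) * X 1 ^ (n / 2)) := by
  apply twoStep
  · simp [a, Ge]
  · simp [a, Ge]
  · intro n ih1 ih2
    show a (n+2) = _
    rw [a]
    rcases Nat.even_or_odd n with he | ho
    · have h0 : n % 2 = 0 := Nat.even_iff.mp he
      have h1 : (n+1) % 2 = 1 := by omega
      have h2 : (n+2) % 2 = 0 := by omega
      have h3 : (n+1) / 2 = n / 2 := by omega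
      have h4 : (n+2) / 2 = n / 2 + 1 := by omega
      rw [ih1, ih2]
      show _ = (X 0 ^ 2 - C c * X 1) * (Ge c (n+2)).1 + C (Ge c (n+2)).2 * _
      rw [show Ge c (n+2) = (X 0 * (Ge c (n+1)).1 - X 1 * (Ge c n).1
          + C (Ge c (n+1)).2 * X 1 ^ (n / 2), c * (Ge c (n+1)).2 - (Ge c n).2) by
        rw [Ge]; simp [h0]]
      rw [h0, h1, h2, h3, h4]
      simp only [map_sub, map_mul]
      ring
    · have h0 : n % 2 = 1 := Nat.odd_iff.mp ho
      have h1 : (n+1) % 2 = 0 := by omega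
      have h2 : (n+2) % 2 = 1 := by omega
      have h3 : (n+1) / 2 = n / 2 + 1 := by omega
      have h4 : (n+2) / 2 = n / 2 + 1 := by omega
      rw [ih1, ih2]
      show _ = (X 0 ^ 2 - C c * X 1) * (Ge c (n+2)).1 + C (Ge c (n+2)).2 * _
      rw [show Ge c (n+2) = (X 0 * (Ge c (n+1)).1 - X 1 * (Ge c n).1,
          (Ge c (n+1)).2 - (Ge c n).2) by
        rw [Ge]; simp [h0]]
      rw [h0, h1, h2, h3, h4]
      simp only [map_sub]
      ring

theorem sub_hom' {w : Fin 2 → ℕ} {p q : MvPolynomial (Fin 2) ℝ} {n : ℕ}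
    (hp : p.IsWeightedHomogeneous w n) (hq : q.IsWeightedHomogeneous w n) :
    (p - q).IsWeightedHomogeneous w n := by
  rw [sub_eq_add_neg]
  exact hp.add (by simpa using (isWeightedHomogeneous_C w (-1 : ℝ)).mul hq)

theorem hx0 (p : MvPolynomial (Fin 2) ℝ) (d : ℕ) (hp : p.IsWeightedHomogeneous ![1,2] d) :
    (X 0 * p).IsWeightedHomogeneous ![1,2] (d + 1) := by
  have := (isWeightedHomogeneous_X ℝ (![1,2] : Fin 2 → ℕ) 0).mul hp
  have e : (![1,2] : Fin 2 → ℕ) 0 + d = d + 1 := by show 1 + d = d + 1; omega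
  exact e ▸ this

theorem hx1 (p : MvPolynomial (Fin 2) ℝ) (d : ℕ) (hp : p.IsWeightedHomogeneous ![1,2] d) :
    (X 1 * p).IsWeightedHomogeneous ![1,2] (d + 2) := by
  have := (isWeightedHomogeneous_X ℝ (![1,2] : Fin 2 → ℕ) 1).mul hp
  have e : (![1,2] : Fin 2 → ℕ) 1 + d = d + 2 := by show 2 + d = d + 2; omega
  exact e ▸ this

theorem X1_pow_hom (t : ℕ) :
    ((X 1 : MvPolynomial (Fin 2) ℝ) ^ t).IsWeightedHomogeneous ![1,2] (2 * t) := by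
  rw [X_pow_eq_monomial]
  apply isWeightedHomogeneous_monomial
  simp [Finsupp.weight, Finsupp.linearCombination, Finsupp.sum_single_index, mul_comm]

theorem CX1_hom (c : ℝ) :
    (C c * X 1 : MvPolynomial (Fin 2) ℝ).IsWeightedHomogeneous ![1,2] 2 := by
  have h : (X 1 : MvPolynomial (Fin 2) ℝ).IsWeightedHomogeneous ![1,2] 2 := by
    have := X1_pow_hom 1
    rwa [pow_one, mul_one] at this
  simpa using (isWeightedHomogeneous_C (![1,2] : Fin 2 → ℕ) c).mul h

theorem X0_sq_hom :
    ((X 0 : MvPolynomial (Fin 2) ℝ) ^ 2).IsWeightedHomogeneous ![1,2] 2 := by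
  rw [X_pow_eq_monomial]
  apply isWeightedHomogeneous_monomial
  simp [Finsupp.weight, Finsupp.linearCombination, Finsupp.sum_single_index, mul_comm]

theorem a_hom : ∀ n, (a n).IsWeightedHomogeneous (![1, 2] : Fin 2 → ℕ) n := by
  apply twoStep
  · exact isWeightedHomogeneous_one _ _
  · simpa [a] using isWeightedHomogeneous_X ℝ (![1,2] : Fin 2 → ℕ) 0
  · intro n ih1 ih2
    rw [a]
    apply sub_hom'
    · simpa using hx0 _ _ ih2
    · simpa using hx1 _ _ ih1

theorem Ge_two (c : ℝ) : Ge c 2 = (C 1, c - 1) := by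
  show Ge c (0 + 2) = _
  rw [Ge]
  simp [Ge]

theorem Ge_three (c : ℝ) : Ge c 3 = (X 0 * C 1, c - 2) := by
  show Ge c (1 + 2) = _
  rw [Ge]
  simp [Ge, Ge_two c]
  ring

theorem Ge_hom (c : ℝ) :
    ∀ n, ((Ge c n).1).IsWeightedHomogeneous (![1, 2] : Fin 2 → ℕ) (n - 2) := by
  apply twoStep
  · exact isWeightedHomogeneous_zero _ _ _
  · exact isWeightedHomogeneous_zero _ _ _
  · intro n ih1 ih2
    match n, ih1, ih2 with
    | 0, ih1, ih2 =>
      show ((Ge c 2).1).IsWeightedHomogeneous _ 0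
      rw [Ge_two]
      exact isWeightedHomogeneous_C _ _
    | 1, ih1, ih2 =>
      show ((Ge c 3).1).IsWeightedHomogeneous _ 1
      rw [Ge_three]
      simpa using hx0 _ _ (isWeightedHomogeneous_C (![1,2] : Fin 2 → ℕ) (1 : ℝ))
    | (k + 2), ih1, ih2 =>
      have hk1 : ((Ge c (k+2)).1).IsWeightedHomogeneous (![1,2] : Fin 2 → ℕ) k := by
        simpa using ih1
      have hk2 : ((Ge c (k+3)).1).IsWeightedHomogeneous (![1,2] : Fin 2 → ℕ) (k+1) := by
        simpa using ih2
      show ((Ge c (k+4)).1).IsWeightedHomogeneous _ (k + 2)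
      rcases Nat.even_or_odd (k + 2) with he | ho
      · have h0 : (k + 2) % 2 = 0 := Nat.even_iff.mp he
        rw [show (Ge c (k+4)).1 = X 0 * (Ge c (k+3)).1 - X 1 * (Ge c (k+2)).1
            + C (Ge c (k+3)).2 * X 1 ^ ((k+2) / 2) by
          show (Ge c ((k+2)+2)).1 = _
          rw [Ge]; simp [h0]]
        apply IsWeightedHomogeneous.add
        · exact sub_hom' (hx0 _ _ hk2) (hx1 _ _ hk1)
        · have hp := X1_pow_hom ((k+2)/2)
          have e : 2 * ((k+2)/2) = k + 2 := by omega
          rw [e] at hp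
          simpa using (isWeightedHomogeneous_C (![1,2] : Fin 2 → ℕ) ((Ge c (k+3)).2)).mul hp
      · have h0 : (k + 2) % 2 = 1 := Nat.odd_iff.mp ho
        rw [show (Ge c (k+4)).1 = X 0 * (Ge c (k+3)).1 - X 1 * (Ge c (k+2)).1 by
          show (Ge c ((k+2)+2)).1 = _
          rw [Ge]; simp [h0]]
        exact sub_hom' (hx0 _ _ hk2) (hx1 _ _ hk1)

theorem a_eval_trig (θ : ℝ) : ∀ n,
    eval (![2 * Real.cos θ, 1] : Fin 2 → ℝ) (a n) * Real.sin θ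
      = Real.sin ((n + 1) * θ) := by
  apply twoStep
  · simp [a]
  · rw [a]
    simp only [eval_X]
    rw [show (![2 * Real.cos θ, 1] : Fin 2 → ℝ) 0 = 2 * Real.cos θ from rfl]
    rw [show ((1:ℕ) + 1 : ℝ) * θ = 2 * θ by ring, Real.sin_two_mul]
    ring
  · intro n ih1 ih2
    rw [a]
    simp only [map_sub, map_mul, eval_X]
    rw [show (![2 * Real.cos θ, 1] : Fin 2 → ℝ) 0 = 2 * Real.cos θ from rfl,
        show (![2 * Real.cos θ, 1] : Fin 2 → ℝ) 1 = 1 from rfl]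
    have e1 : ((n + 2 : ℕ) + 1 : ℝ) * θ = ((n+1:ℕ) + 1) * θ + θ := by push_cast; ring
    have e2 : ((n:ℕ) + 1 : ℝ) * θ = ((n+1:ℕ) + 1) * θ - θ := by push_cast; ring
    rw [e1, Real.sin_add]
    have h := Real.sin_sub (((n+1:ℕ) + 1) * θ) θ
    rw [← e2] at h
    rw [← ih1, ← ih2] at *
    nlinarith [h]

theorem a_eval_two : ∀ n, eval (![2, 1] : Fin 2 → ℝ) (a n) = n + 1 := by
  apply twoStep
  · simp [a]
  · rw [a]; simp only [eval_X]
    rw [show (![2, 1] : Fin 2 → ℝ) 0 = 2 from rfl]; norm_num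
  · intro n ih1 ih2
    rw [a]
    simp only [map_sub, map_mul, eval_X]
    rw [show (![2, 1] : Fin 2 → ℝ) 0 = 2 from rfl,
        show (![2, 1] : Fin 2 → ℝ) 1 = 1 from rfl, ih1, ih2]
    push_cast; ring

theorem a_ne_zero (n : ℕ) : a n ≠ 0 := by
  intro h
  have h2 := a_eval_two n
  rw [h] at h2
  simp at h2
  exact absurd h2 (by positivity)

theorem coeff_mul_homog_eq_zero {h : MvPolynomial (Fin 2) ℝ} {M : ℕ}
    (hh : h.IsWeightedHomogeneous (![1,2] : Fin 2 → ℕ) M) (p : MvPolynomial (Fin 2) ℝ)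
    {d : Fin 2 →₀ ℕ} (hd : Finsupp.weight (![1,2] : Fin 2 → ℕ) d < M) :
    coeff d (p * h) = 0 := by
  rw [coeff_mul]
  apply Finset.sum_eq_zero
  intro x hx
  rw [Finset.HasAntidiagonal.mem_antidiagonal] at hx
  by_cases hc : coeff x.2 h = 0
  · rw [hc, mul_zero]
  · exfalso
    have hw := hh hc
    have : Finsupp.weight (![1,2] : Fin 2 → ℕ) d
        = Finsupp.weight (![1,2] : Fin 2 → ℕ) x.1 + Finsupp.weight (![1,2] : Fin 2 → ℕ) x.2 := by
      rw [← hx, map_add]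
    omega

theorem not_mem_span {g₁ g₂ f : MvPolynomial (Fin 2) ℝ} {d₁ d₂ i M : ℕ}
    (h1 : g₁.IsWeightedHomogeneous (![1,2] : Fin 2 → ℕ) d₁)
    (h2 : g₂.IsWeightedHomogeneous (![1,2] : Fin 2 → ℕ) d₂)
    (hM1 : M ≤ d₁) (hM2 : M ≤ d₂)
    (hf : f.IsWeightedHomogeneous (![1,2] : Fin 2 → ℕ) i) (hf0 : f ≠ 0) (hiM : i < M) :
    f ∉ Ideal.span ({g₁, g₂} : Set (MvPolynomial (Fin 2) ℝ)) := by
  intro hmem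
  rw [Ideal.mem_span_pair] at hmem
  obtain ⟨u, v, huv⟩ := hmem
  obtain ⟨d, hd⟩ := ne_zero_iff.mp hf0
  have hwd : Finsupp.weight (![1,2] : Fin 2 → ℕ) d = i := hf hd
  have hz : coeff d f = 0 := by
    rw [← huv, coeff_add, coeff_mul_homog_eq_zero h1 u (by omega),
      coeff_mul_homog_eq_zero h2 v (by omega), add_zero]
  exact hd hz

theorem f_hom (c : ℝ) :
    (X 0 ^ 2 - C c * X 1 : MvPolynomial (Fin 2) ℝ).IsWeightedHomogeneous ![1,2] 2 :=
  sub_hom' X0_sq_hom (CX1_hom c)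

end GdAux

open GdAux

/-- Let `I_m` be the ideal of `ℝ[q₁,q₂]` generated by `a_m` and `q₂·a_{m−1}`
(for a fixed `m ≥ 3`).  There exist weighted homogeneous polynomials `f`, `g`
(for the weights `w(q₁) = 1`, `w(q₂) = 2`) of positive weighted degrees `i`,
`j` with `i + j = m` such that `f ∉ I_m`, `g ∉ I_m`, but `f·g ∈ I_m`. -/
theorem stmt_5 (m : ℕ) (hm : 3 ≤ m) :
    ∃ (f g : MvPolynomial (Fin 2) ℝ) (i j : ℕ),
      f.IsWeightedHomogeneous (![1, 2] : Fin 2 → ℕ) i ∧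
      g.IsWeightedHomogeneous (![1, 2] : Fin 2 → ℕ) j ∧
      1 ≤ i ∧ 1 ≤ j ∧ i + j = m ∧
      f ∉ Ideal.span ({a m, X 1 * a (m - 1)} : Set (MvPolynomial (Fin 2) ℝ)) ∧
      g ∉ Ideal.span ({a m, X 1 * a (m - 1)} : Set (MvPolynomial (Fin 2) ℝ)) ∧
      f * g ∈ Ideal.span ({a m, X 1 * a (m - 1)} : Set (MvPolynomial (Fin 2) ℝ)) := by
  classical
  -- the angle and the root
  set θ : ℝ := Real.pi / (m + 1) with hθ
  have hm1 : (0:ℝ) < (m:ℝ) + 1 := by positivity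
  have hθpos : 0 < θ := by
    apply div_pos Real.pi_pos hm1
  have hθlt : θ < Real.pi / 2 := by
    rw [hθ, div_lt_div_iff₀ hm1 (by norm_num)]
    nlinarith [Real.pi_pos, show (3:ℝ) ≤ (m:ℝ) from by exact_mod_cast hm]
  have hθltpi : θ < Real.pi := lt_trans hθlt (by linarith [Real.pi_pos])
  have hsin : Real.sin θ ≠ 0 :=
    ne_of_gt (Real.sin_pos_of_pos_of_lt_pi hθpos hθltpi)
  have hcos : 0 < Real.cos θ := Real.cos_pos_of_mem_Ioo ⟨by linarith, hθlt⟩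
  set r : ℝ := 2 * Real.cos θ with hr
  have hrpos : 0 < r := by rw [hr]; linarith
  set c : ℝ := r ^ 2 with hc
  have hcpos : 0 < c := by positivity
  -- `a m` evaluates to zero at `(r, 1)`
  have heval0 : eval (![r, 1] : Fin 2 → ℝ) (a m) = 0 := by
    have ht := a_eval_trig θ m
    have hmθ : ((m:ℝ) + 1) * θ = Real.pi := by
      rw [hθ]; field_simp
    rw [hmθ, Real.sin_pi] at ht
    exact (mul_eq_zero.mp ht).resolve_right hsin
  -- the remainder coefficient vanishes
  have hGe : (Ge c m).2 = 0 := by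
    have hq := a_eq c m
    have := congrArg (eval (![r, 1] : Fin 2 → ℝ)) hq
    rw [heval0] at this
    simp only [map_add, map_mul, map_sub, map_pow, eval_X, eval_C] at this
    rw [show (![r, 1] : Fin 2 → ℝ) 0 = r from rfl,
        show (![r, 1] : Fin 2 → ℝ) 1 = 1 from rfl] at this
    rw [hc]
    rw [hc] at this
    simp only [mul_one, one_pow, sub_self, zero_mul, zero_add] at this
    have hrp : r ^ (m % 2) ≠ 0 := pow_ne_zero _ (ne_of_gt hrpos)
    have := this.symm
    rcases mul_eq_zero.mp this with h | h
    · exact h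
    · exact absurd h hrp
  -- the factorization
  have hfact : a m = (X 0 ^ 2 - C c * X 1) * (Ge c m).1 := by
    have hq := a_eq c m
    rw [hGe] at hq
    simpa using hq
  -- define f and g
  refine ⟨X 0 ^ 2 - C c * X 1, (Ge c m).1, 2, m - 2, ?_, ?_, ?_, ?_, ?_, ?_, ?_, ?_⟩
  · exact f_hom c
  · exact Ge_hom c m
  · norm_num
  · omega
  · omega
  · -- f not in the ideal
    have hfne : (X 0 ^ 2 - C c * X 1 : MvPolynomial (Fin 2) ℝ) ≠ 0 := by
      intro h
      have := congrArg (eval (![0, 1] : Fin 2 → ℝ)) h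
      simp only [map_sub, map_pow, map_mul, eval_X, eval_C, map_zero] at this
      rw [show (![(0:ℝ), 1] : Fin 2 → ℝ) 0 = 0 from rfl,
          show (![(0:ℝ), 1] : Fin 2 → ℝ) 1 = 1 from rfl] at this
      have : c = 0 := by nlinarith [this]
      exact absurd this (ne_of_gt hcpos)
    apply not_mem_span (a_hom m) (M := m)
      (by simpa using hx1 (a (m-1)) (m-1) (a_hom (m-1))) le_rfl (by omega)
      (f_hom c) hfne (by omega)
  · -- g not in the ideal
    have hgne : (Ge c m).1 ≠ 0 := by
      intro h
      rw [h, mul_zero] at hfact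
      exact a_ne_zero m hfact
    apply not_mem_span (a_hom m) (M := m)
      (by simpa using hx1 (a (m-1)) (m-1) (a_hom (m-1))) le_rfl (by omega)
      (Ge_hom c m) hgne (by omega)
  · rw [← hfact]
    exact Ideal.subset_span (Set.mem_insert _ _)
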